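/- Let ρ : ℝ^d → ℝ be continuous, nonnegative, bounded, integrable and even (ρ(−x) = ρ(x)), not identically zero. Let α ∈ (0,1) and let f : ℝ^d × ℝ → ℝ be continuous with α(s−s′) ≤ f(x,s) − f(x,s′) ≤ α⁻¹(s−s′) for all x ∈ ℝ^d and all s ≥ s′, and with sup_x |f(x,0)| < ∞. Define K(x,m) := ∫_{ℝ^d} ρ(x−z) f(z,(m∗ρ)(z)) dz. Then K is strongly monotone: for all Borel probability measures m₁, m₂ on ℝ^d, ∫(K(x,m₁) − K(x,m₂)) d(m₁−m₂)(x) ≥ (α/‖ρ‖²_{L¹}) ∫_{ℝ^d} (K(x,m₁) − K(x,m₂))² dx. -/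

import Mathlib

/-!
Write `uᵢ = mᵢ∗ρ` and `g = f(·, u₁) - f(·, u₂)`, so that `K(·, m₁) - K(·, m₂) = ρ∗g`. Since `ρ` is
even, Fubini turns the pairing `∫ ρ∗g d(m₁ - m₂)` into `∫ g (u₁ - u₂)`, and this is at least
`α ∫ g²` because each `f x` is monotone and `α⁻¹`-Lipschitz, hence `α`-cocoercive. Young's
inequality `‖ρ∗g‖₂ ≤ ‖ρ‖₁ ‖g‖₂`, obtained from a weighted Cauchy–Schwarz inequality and Fubini,
finishes the proof.
-/

open MeasureTheory

/-- Convolution of a (probability) measure with a kernel: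
`(m∗ρ)(z) = ∫ ρ(z-y) dm(y)`. -/
noncomputable def measConv {d : ℕ} (ρ : EuclideanSpace ℝ (Fin d) → ℝ)
    (m : Measure (EuclideanSpace ℝ (Fin d))) (z : EuclideanSpace ℝ (Fin d)) : ℝ :=
  ∫ y, ρ (z - y) ∂m

/-- The regularized coupling `K(x,m) = ∫ ρ(x-z) f(z,(m∗ρ)(z)) dz`. -/
noncomputable def llCoupling {d : ℕ} (ρ : EuclideanSpace ℝ (Fin d) → ℝ)
    (f : EuclideanSpace ℝ (Fin d) → ℝ → ℝ)
    (m : Measure (EuclideanSpace ℝ (Fin d))) (x : EuclideanSpace ℝ (Fin d)) : ℝ :=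
  ∫ z, ρ (x - z) * f z (measConv ρ m z)

section Cocoercive

variable {φ : ℝ → ℝ} {α : ℝ}

lemma mul_abs_sub_le_abs_sub (hφ : Monotone φ)
    (h : ∀ s s', s' ≤ s → α * (φ s - φ s') ≤ s - s') (s s' : ℝ) :
    α * |φ s - φ s'| ≤ |s - s'| := by
  rcases le_total s' s with hs | hs
  · rw [abs_of_nonneg (sub_nonneg.2 (hφ hs)), abs_of_nonneg (sub_nonneg.2 hs)]
    exact h s s' hs
  · rw [abs_sub_comm, abs_sub_comm s, abs_of_nonneg (sub_nonneg.2 (hφ hs)),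
      abs_of_nonneg (sub_nonneg.2 hs)]
    exact h s' s hs

lemma mul_sq_sub_le_mul_sub (hφ : Monotone φ)
    (h : ∀ s s', s' ≤ s → α * (φ s - φ s') ≤ s - s') (s s' : ℝ) :
    α * (φ s - φ s') ^ 2 ≤ (φ s - φ s') * (s - s') := by
  rcases le_total s' s with hs | hs
  · nlinarith [h s s' hs, sub_nonneg.2 (hφ hs)]
  · nlinarith [h s' s hs, sub_nonneg.2 (hφ hs)]

lemma abs_le_abs_add_abs_div (hα : 0 < α) (hφ : Monotone φ)
    (h : ∀ s s', s' ≤ s → α * (φ s - φ s') ≤ s - s') (s : ℝ) :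
    |φ s| ≤ |φ 0| + |s| / α := by
  have := mul_abs_sub_le_abs_sub hφ h s 0
  rw [sub_zero, ← le_div_iff₀' hα] at this
  linarith [abs_sub_abs_le_abs_sub (φ s) (φ 0)]

end Cocoercive

lemma sq_integral_mul_le_integral_mul_integral_mul_sq {X : Type*} [MeasurableSpace X]
    {μ : Measure X} {w g : X → ℝ} (hw : 0 ≤ᵐ[μ] w) (hwi : Integrable w μ)
    (hwg : Integrable (fun a => w a * g a) μ) (hwg2 : Integrable (fun a => w a * g a ^ 2) μ) :
    (∫ a, w a * g a ∂μ) ^ 2 ≤ (∫ a, w a ∂μ) * ∫ a, w a * g a ^ 2 ∂μ := by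
  -- `t ↦ ∫ w (g - t)²` is a nonnegative quadratic polynomial, so its discriminant is `≤ 0`.
  have hquad : ∀ t : ℝ, 0 ≤ (∫ a, w a ∂μ) * (t * t) + (-2 * ∫ a, w a * g a ∂μ) * t
      + ∫ a, w a * g a ^ 2 ∂μ := by
    intro t
    have hexp : ∫ a, w a * (g a - t) ^ 2 ∂μ
        = ∫ a, w a * g a ^ 2 ∂μ - 2 * t * ∫ a, w a * g a ∂μ + t * t * ∫ a, w a ∂μ := by
      rw [← integral_const_mul, ← integral_const_mul, ← integral_sub hwg2 (hwg.const_mul _),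
        ← integral_add (f := fun a => w a * g a ^ 2 - 2 * t * (w a * g a))
          (hwg2.sub (hwg.const_mul _)) (hwi.const_mul _)]
      congr 1 with a
      ring
    have := integral_nonneg_of_ae (hw.mono fun a ha => mul_nonneg ha (sq_nonneg (g a - t)))
    linarith
  have := discrim_le_zero hquad
  rw [discrim] at this
  nlinarith

section Convolution

variable {G : Type*} [AddGroup G] [MeasurableSpace G] [MeasurableAdd₂ G] [MeasurableNeg G]
  {μ : Measure G} [SFinite μ] [μ.IsAddRightInvariant]
  {ρ g : G → ℝ}

lemma integrable_comp_sub_prod (hρ : Integrable ρ μ) (ν : Measure G) [IsFiniteMeasure ν] :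
    Integrable (fun p : G × G => ρ (p.1 - p.2)) (μ.prod ν) := by
  simpa using (integrable_const (1 : ℝ)).convolution_integrand (ContinuousLinearMap.mul ℝ ℝ) hρ

lemma integral_sq_integral_comp_sub_mul_le [μ.IsAddLeftInvariant] [μ.IsNegInvariant]
    (hρ : ∀ x, 0 ≤ ρ x) (hρi : Integrable ρ μ)
    (hg : AEStronglyMeasurable g μ) (hg2 : Integrable (fun z => g z ^ 2) μ) :
    ∫ x, (∫ z, ρ (x - z) * g z ∂μ) ^ 2 ∂μ ≤ (∫ x, ρ x ∂μ) ^ 2 * ∫ z, g z ^ 2 ∂μ := by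
  have hprod : Integrable (Function.uncurry fun x z => ρ (x - z) * g z ^ 2) (μ.prod μ) := by
    simpa [Function.uncurry_def, mul_comm] using
      hg2.convolution_integrand (ContinuousLinearMap.mul ℝ ℝ) hρi
  have hCS : ∀ᵐ x ∂μ, (∫ z, ρ (x - z) * g z ∂μ) ^ 2
      ≤ (∫ x, ρ x ∂μ) * ∫ z, ρ (x - z) * g z ^ 2 ∂μ := by
    filter_upwards [hprod.prod_right_ae] with x hx
    have hρx := hρi.comp_sub_left x
    -- `ρ (x - z) |g z| ≤ ρ (x - z) (1 + g z ^ 2)`, integrable for a.e. `x` by Fubini.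
    have hxg : Integrable (fun z => ρ (x - z) * g z) μ := by
      refine (hρx.add hx).mono'
        (hρi.aestronglyMeasurable.convolution_integrand_swap_snd (ContinuousLinearMap.mul ℝ ℝ) hg x)
        (ae_of_all _ fun z => ?_)
      simp only [Pi.add_apply, Function.uncurry_apply_pair]
      rw [Real.norm_eq_abs, abs_mul, abs_of_nonneg (hρ (x - z))]
      nlinarith [mul_nonneg (hρ (x - z)) (sq_nonneg (|g z| - 1)), sq_abs (g z), hρ (x - z)]
    simpa only [integral_sub_left_eq_self] using
      sq_integral_mul_le_integral_mul_integral_mul_sq (ae_of_all _ fun z => hρ (x - z)) hρx hxg hx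
  have hFubini : ∫ x, ∫ z, ρ (x - z) * g z ^ 2 ∂μ ∂μ = (∫ x, ρ x ∂μ) * ∫ z, g z ^ 2 ∂μ := by
    simp_rw [integral_integral_swap hprod, integral_mul_const, integral_sub_right_eq_self,
      integral_const_mul]
  calc ∫ x, (∫ z, ρ (x - z) * g z ∂μ) ^ 2 ∂μ
      ≤ ∫ x, (∫ x, ρ x ∂μ) * ∫ z, ρ (x - z) * g z ^ 2 ∂μ ∂μ :=
        integral_mono_of_nonneg (ae_of_all _ fun x => sq_nonneg _)
          (hprod.integral_prod_left.const_mul _) hCS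
    _ = (∫ x, ρ x ∂μ) ^ 2 * ∫ z, g z ^ 2 ∂μ := by
        rw [integral_const_mul, hFubini, sq, mul_assoc]

end Convolution

section MeasConv

variable {d : ℕ} {ρ : EuclideanSpace ℝ (Fin d) → ℝ}

lemma measConv_nonneg (hρ : ∀ x, 0 ≤ ρ x) (m : Measure (EuclideanSpace ℝ (Fin d)))
    (z : EuclideanSpace ℝ (Fin d)) : 0 ≤ measConv ρ m z :=
  integral_nonneg fun _ => hρ _

lemma measConv_le {C : ℝ} (hρ : ∀ x, 0 ≤ ρ x) (hC : ∀ x, ρ x ≤ C)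
    (m : Measure (EuclideanSpace ℝ (Fin d))) [IsProbabilityMeasure m]
    (z : EuclideanSpace ℝ (Fin d)) : measConv ρ m z ≤ C :=
  (integral_mono_of_nonneg (ae_of_all m fun y => hρ (z - y)) (integrable_const C)
    (ae_of_all m fun y => hC (z - y))).trans_eq (by simp)

lemma integrable_measConv (hρ : Integrable ρ) (m : Measure (EuclideanSpace ℝ (Fin d)))
    [IsFiniteMeasure m] : Integrable (measConv ρ m) :=
  (integrable_comp_sub_prod hρ m).integral_prod_left

lemma integral_integral_mul_eq_integral_mul_measConv {g : EuclideanSpace ℝ (Fin d) → ℝ} {B : ℝ}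
    (hρ : Integrable ρ) (hρeven : ∀ x, ρ (-x) = ρ x) (hg : AEStronglyMeasurable g)
    (hgB : ∀ z, |g z| ≤ B) (m : Measure (EuclideanSpace ℝ (Fin d))) [IsFiniteMeasure m] :
    ∫ x, (∫ z, ρ (x - z) * g z) ∂m = ∫ z, g z * measConv ρ m z := by
  have hsymm : ∀ x z, ρ (z - x) = ρ (x - z) := fun x z => by rw [← neg_sub, hρeven]
  have hint : Integrable (Function.uncurry fun x z => ρ (x - z) * g z) (m.prod volume) := by
    refine Integrable.mul_bdd ?_ hg.comp_snd (ae_of_all _ fun p => hgB p.2)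
    simpa [Function.comp_def, hsymm] using (integrable_comp_sub_prod hρ m).swap
  rw [integral_integral_swap hint]
  congr 1 with z
  rw [integral_mul_const, mul_comm, measConv]
  simp_rw [hsymm z]

lemma aestronglyMeasurable_comp_measConv {f : EuclideanSpace ℝ (Fin d) → ℝ → ℝ}
    (hρ : Integrable ρ) (hf : Continuous (Function.uncurry f))
    (m : Measure (EuclideanSpace ℝ (Fin d))) [IsFiniteMeasure m] :
    AEStronglyMeasurable (fun z => f z (measConv ρ m z)) :=
  hf.comp_aestronglyMeasurable
    (aestronglyMeasurable_id.prodMk (integrable_measConv hρ m).aestronglyMeasurable)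

lemma llCoupling_sub_llCoupling {f : EuclideanSpace ℝ (Fin d) → ℝ → ℝ} {B : ℝ}
    (hρ : Integrable ρ) (hf : Continuous (Function.uncurry f))
    (m₁ m₂ : Measure (EuclideanSpace ℝ (Fin d))) [IsFiniteMeasure m₁] [IsFiniteMeasure m₂]
    (hB₁ : ∀ z, |f z (measConv ρ m₁ z)| ≤ B) (hB₂ : ∀ z, |f z (measConv ρ m₂ z)| ≤ B)
    (x : EuclideanSpace ℝ (Fin d)) :
    llCoupling ρ f m₁ x - llCoupling ρ f m₂ x
      = ∫ z, ρ (x - z) * (f z (measConv ρ m₁ z) - f z (measConv ρ m₂ z)) := by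
  simp_rw [llCoupling, mul_sub]
  exact (integral_sub
    ((hρ.comp_sub_left x).mul_bdd (aestronglyMeasurable_comp_measConv hρ hf m₁) (ae_of_all _ hB₁))
    ((hρ.comp_sub_left x).mul_bdd (aestronglyMeasurable_comp_measConv hρ hf m₂)
      (ae_of_all _ hB₂))).symm

end MeasConv

lemma div_sq_mul_integral_sq_le_integral_sub_integral {d : ℕ}
    {ρ g : EuclideanSpace ℝ (Fin d) → ℝ} {α B : ℝ}
    (hρ : ∀ x, 0 ≤ ρ x) (hρi : Integrable ρ) (hρeven : ∀ x, ρ (-x) = ρ x) (hα : 0 < α)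
    (hg : AEStronglyMeasurable g) (hgB : ∀ z, |g z| ≤ B)
    (m₁ m₂ : Measure (EuclideanSpace ℝ (Fin d))) [IsFiniteMeasure m₁] [IsFiniteMeasure m₂]
    (hcoc : ∀ z, α * g z ^ 2 ≤ g z * (measConv ρ m₁ z - measConv ρ m₂ z)) :
    α / (∫ x, ρ x) ^ 2 * ∫ x, (∫ z, ρ (x - z) * g z) ^ 2
      ≤ ∫ x, (∫ z, ρ (x - z) * g z) ∂m₁ - ∫ x, (∫ z, ρ (x - z) * g z) ∂m₂ := by
  have hgu : ∀ (m : Measure (EuclideanSpace ℝ (Fin d))) [IsFiniteMeasure m],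
      Integrable (fun z => g z * measConv ρ m z) :=
    fun m _ => (integrable_measConv hρi m).bdd_mul hg (ae_of_all _ hgB)
  have hgu₁₂ : Integrable (fun z => g z * (measConv ρ m₁ z - measConv ρ m₂ z)) :=
    ((integrable_measConv hρi m₁).sub (integrable_measConv hρi m₂)).bdd_mul hg (ae_of_all _ hgB)
  have hg2 : Integrable (fun z => g z ^ 2) :=
    (hgu₁₂.const_mul α⁻¹).mono' (hg.pow 2) (ae_of_all _ fun z => by
      rw [Real.norm_of_nonneg (sq_nonneg _), le_inv_mul_iff₀ hα]
      exact hcoc z)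
  have hα_div : α / (∫ x, ρ x) ^ 2 * (∫ x, ρ x) ^ 2 ≤ α := by
    rcases eq_or_ne (∫ x, ρ x) 0 with h | h
    · simp [h, hα.le]
    · rw [div_mul_cancel₀ _ (pow_ne_zero 2 h)]
  rw [integral_integral_mul_eq_integral_mul_measConv hρi hρeven hg hgB,
    integral_integral_mul_eq_integral_mul_measConv hρi hρeven hg hgB,
    ← integral_sub (hgu m₁) (hgu m₂)]
  calc α / (∫ x, ρ x) ^ 2 * ∫ x, (∫ z, ρ (x - z) * g z) ^ 2
      ≤ α / (∫ x, ρ x) ^ 2 * ((∫ x, ρ x) ^ 2 * ∫ z, g z ^ 2) := by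
        gcongr
        exact integral_sq_integral_comp_sub_mul_le hρ hρi hg hg2
    _ ≤ α * ∫ z, g z ^ 2 := by
        rw [← mul_assoc]
        exact mul_le_mul_of_nonneg_right hα_div (integral_nonneg fun z => sq_nonneg _)
    _ = ∫ z, α * g z ^ 2 := (integral_const_mul _ _).symm
    _ ≤ ∫ z, g z * (measConv ρ m₁ z - measConv ρ m₂ z) :=
        integral_mono (hg2.const_mul α) hgu₁₂ hcoc
    _ = ∫ z, (g z * measConv ρ m₁ z - g z * measConv ρ m₂ z) := by simp_rw [mul_sub]

theorem llCoupling_strongly_monotone_general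
    {d : ℕ} (ρ : EuclideanSpace ℝ (Fin d) → ℝ)
    (hρnn : ∀ x, 0 ≤ ρ x) (hρb : ∃ C, ∀ x, ρ x ≤ C)
    (hρint : Integrable ρ) (hρeven : ∀ x, ρ (-x) = ρ x)
    (α : ℝ) (hα : α ∈ Set.Ioo (0 : ℝ) 1)
    (f : EuclideanSpace ℝ (Fin d) → ℝ → ℝ)
    (hfc : Continuous (Function.uncurry f))
    (hfmono : ∀ x s s', s' ≤ s →
      α * (s - s') ≤ f x s - f x s' ∧ f x s - f x s' ≤ α⁻¹ * (s - s'))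
    (hf0 : ∃ C, ∀ x, |f x 0| ≤ C)
    (m₁ m₂ : Measure (EuclideanSpace ℝ (Fin d)))
    [IsProbabilityMeasure m₁] [IsProbabilityMeasure m₂] :
    (α / (∫ x, ρ x) ^ 2) * ∫ x, (llCoupling ρ f m₁ x - llCoupling ρ f m₂ x) ^ 2
      ≤ (∫ x, (llCoupling ρ f m₁ x - llCoupling ρ f m₂ x) ∂m₁)
        - (∫ x, (llCoupling ρ f m₁ x - llCoupling ρ f m₂ x) ∂m₂) := by
  obtain ⟨hα₀, -⟩ := hα
  obtain ⟨C, hC⟩ := hρb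
  obtain ⟨C₀, hC₀⟩ := hf0
  have hmono (x) : Monotone (f x) := fun s' s hs =>
    sub_nonneg.1 ((mul_nonneg hα₀.le (sub_nonneg.2 hs)).trans (hfmono x s s' hs).1)
  have hcoc (x) (s s' : ℝ) (hs : s' ≤ s) : α * (f x s - f x s') ≤ s - s' := by
    simpa [← mul_assoc, hα₀.ne'] using mul_le_mul_of_nonneg_left (hfmono x s s' hs).2 hα₀.le
  have hbdd (m : Measure (EuclideanSpace ℝ (Fin d))) [IsProbabilityMeasure m] (z) :
      |f z (measConv ρ m z)| ≤ C₀ + C / α := by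
    refine (abs_le_abs_add_abs_div hα₀ (hmono z) (hcoc z) _).trans (add_le_add (hC₀ z) ?_)
    rw [abs_of_nonneg (measConv_nonneg hρnn m z)]
    gcongr
    exact measConv_le hρnn hC m z
  simp_rw [llCoupling_sub_llCoupling hρint hfc m₁ m₂ (hbdd m₁) (hbdd m₂)]
  exact div_sq_mul_integral_sq_le_integral_sub_integral hρnn hρint hρeven hα₀
    ((aestronglyMeasurable_comp_measConv hρint hfc m₁).sub
      (aestronglyMeasurable_comp_measConv hρint hfc m₂))
    (fun z => (abs_sub _ _).trans (add_le_add (hbdd m₁ z) (hbdd m₂ z))) m₁ m₂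
    (fun z => mul_sq_sub_le_mul_sub (hmono z) (hcoc z) _ _)

/-- The classical Lasry–Lions coupling `K(x,m) = (f(·, m∗ρ(·)))∗ρ` is strongly monotone
with constant `α/‖ρ‖²_{L¹}`. -/
theorem llCoupling_strongly_monotone
    {d : ℕ} (ρ : EuclideanSpace ℝ (Fin d) → ℝ)
    (hρc : Continuous ρ) (hρnn : ∀ x, 0 ≤ ρ x) (hρb : ∃ C, ∀ x, ρ x ≤ C)
    (hρint : Integrable ρ) (hρeven : ∀ x, ρ (-x) = ρ x)
    (hρne : ∃ x, ρ x ≠ 0)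
    (α : ℝ) (hα : α ∈ Set.Ioo (0 : ℝ) 1)
    (f : EuclideanSpace ℝ (Fin d) → ℝ → ℝ)
    (hfc : Continuous (Function.uncurry f))
    (hfmono : ∀ x s s', s' ≤ s →
      α * (s - s') ≤ f x s - f x s' ∧ f x s - f x s' ≤ α⁻¹ * (s - s'))
    (hf0 : ∃ C, ∀ x, |f x 0| ≤ C)
    (m₁ m₂ : Measure (EuclideanSpace ℝ (Fin d)))
    [IsProbabilityMeasure m₁] [IsProbabilityMeasure m₂] :
    (α / (∫ x, ρ x) ^ 2) * ∫ x, (llCoupling ρ f m₁ x - llCoupling ρ f m₂ x) ^ 2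
      ≤ (∫ x, (llCoupling ρ f m₁ x - llCoupling ρ f m₂ x) ∂m₁)
        - (∫ x, (llCoupling ρ f m₁ x - llCoupling ρ f m₂ x) ∂m₂) :=
  llCoupling_strongly_monotone_general ρ hρnn hρb hρint hρeven α hα f hfc hfmono hf0 m₁ m₂
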